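/- Let R = k[x,y,z], k a field of characteristic 0, and let I = (x^{β_{11}}y^{β_{12}}z^{β_{13}},...,x^{β_{m1}}y^{β_{m2}}z^{β_{m3}}) be a monomial ideal with √I = (xyz) (equivalently, every β_{ij} is positive). Then there exists a positive integer N such that the N-th differential power I^⟨N⟩ is a principal ideal; explicitly, one may take N = max(N_xy, N_yz, N_xz) where N_xy = β_xmax + β_ymax − β_xmin − β_ymin (and similarly for yz, xz), with β_xmax and β_xmin the maximum and minimum of the x-exponents among the generators, etc.; then I^⟨N⟩ = (x^{N−1+β_xmin} y^{N−1+β_ymin} z^{N−1+β_zmin}). -/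

import Mathlib

/-- `IsDiffOp A n φ` says that the `A`-linear endomorphism `φ` of `R` is an
`A`-linear differential operator of order at most `n`. -/
def IsDiffOp (A : Type*) {R : Type*} [CommRing A] [CommRing R] [Algebra A R] :
    ℕ → (R →ₗ[A] R) → Prop
  | 0 => fun φ => ∃ r : R, φ = LinearMap.mulLeft A r
  | n + 1 => fun φ => ∀ a : R,
      IsDiffOp A n (φ ∘ₗ LinearMap.mulLeft A a - LinearMap.mulLeft A a ∘ₗ φ)

theorem isDiffOp_comp_mulLeft (A : Type*) {R : Type*} [CommRing A] [CommRing R]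
    [Algebra A R] (x : R) (n : ℕ) :
    ∀ φ : R →ₗ[A] R, IsDiffOp A n φ → IsDiffOp A n (φ ∘ₗ LinearMap.mulLeft A x) := by
  induction n with
  | zero =>
    rintro φ ⟨r, rfl⟩
    exact ⟨r * x, by ext y; simp [mul_assoc]⟩
  | succ n ih =>
    intro φ h a
    have h2 := ih _ (h a)
    have key : (φ ∘ₗ LinearMap.mulLeft A x) ∘ₗ LinearMap.mulLeft A a -
        LinearMap.mulLeft A a ∘ₗ (φ ∘ₗ LinearMap.mulLeft A x) =
        (φ ∘ₗ LinearMap.mulLeft A a - LinearMap.mulLeft A a ∘ₗ φ) ∘ₗ LinearMap.mulLeft A x := by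
      ext y
      simp [mul_left_comm]
    rw [key]
    exact h2

/-- The `n`-th differential power of an ideal `I` of the `A`-algebra `R`:
the set of `r ∈ R` such that `∂ r ∈ I` for every `A`-linear differential
operator `∂` of order at most `n - 1`. -/
def diffPow (A : Type*) {R : Type*} [CommRing A] [CommRing R] [Algebra A R]
    (n : ℕ) (I : Ideal R) : Ideal R where
  carrier := {r | ∀ φ : R →ₗ[A] R, IsDiffOp A (n - 1) φ → φ r ∈ I}
  add_mem' := fun hx hy φ hφ => by simp [map_add]; exact I.add_mem (hx φ hφ) (hy φ hφ)
  zero_mem' := fun φ _ => by simpa using I.zero_mem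
  smul_mem' := fun c x hx => by
    intro φ hφ
    have := hx (φ ∘ₗ LinearMap.mulLeft A c) (isDiffOp_comp_mulLeft A c _ φ hφ)
    simpa [smul_eq_mul] using this

/-! The generator `x^a`, `a t = N - 1 + βmin t`, lies in `I^⟨N⟩`: an operator of order `≤ N - 1`
sends `x^a` into the ideal spanned by the monomials `x^b` with `b ≤ a` and `|a| - |b| ≤ N - 1`,
and the choice of `N` forces every such `x^b` to be divisible by a generator of `I`.
Conversely, if `f ∈ I^⟨N⟩` has a monomial `x^c` with `c t < a t`, then `∂_t^e` with
`e = c t + 1 - βmin t ≤ N - 1` produces, in characteristic zero, a monomial whose `t`-exponent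
is `βmin t - 1`, which no generator divides. -/

open MvPolynomial

namespace IsDiffOp

variable {A R : Type*} [CommRing A] [CommRing R] [Algebra A R]

theorem add {n : ℕ} : ∀ {φ ψ : R →ₗ[A] R}, IsDiffOp A n φ → IsDiffOp A n ψ →
    IsDiffOp A n (φ + ψ) := by
  induction n with
  | zero =>
    rintro _ _ ⟨r, rfl⟩ ⟨s, rfl⟩
    exact ⟨r + s, by ext; simp [add_mul]⟩
  | succ n ih =>
    intro φ ψ hφ hψ a
    have hcomm : (φ + ψ) ∘ₗ LinearMap.mulLeft A a - LinearMap.mulLeft A a ∘ₗ (φ + ψ) =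
        (φ ∘ₗ LinearMap.mulLeft A a - LinearMap.mulLeft A a ∘ₗ φ) +
        (ψ ∘ₗ LinearMap.mulLeft A a - LinearMap.mulLeft A a ∘ₗ ψ) := by
      ext; simp; ring
    rw [hcomm]
    exact ih (hφ a) (hψ a)

theorem mulLeft_comp {n : ℕ} (r : R) : ∀ {φ : R →ₗ[A] R}, IsDiffOp A n φ →
    IsDiffOp A n (LinearMap.mulLeft A r ∘ₗ φ) := by
  induction n with
  | zero =>
    rintro _ ⟨s, rfl⟩
    exact ⟨r * s, by ext; simp⟩
  | succ n ih =>
    intro φ hφ a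
    have hcomm : (LinearMap.mulLeft A r ∘ₗ φ) ∘ₗ LinearMap.mulLeft A a -
        LinearMap.mulLeft A a ∘ₗ (LinearMap.mulLeft A r ∘ₗ φ) =
        LinearMap.mulLeft A r ∘ₗ (φ ∘ₗ LinearMap.mulLeft A a - LinearMap.mulLeft A a ∘ₗ φ) := by
      ext; simp; ring
    rw [hcomm]
    exact ih (hφ a)

theorem succ {n : ℕ} : ∀ {φ : R →ₗ[A] R}, IsDiffOp A n φ → IsDiffOp A (n + 1) φ := by
  induction n with
  | zero =>
    rintro _ ⟨r, rfl⟩ a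
    exact ⟨0, by ext; simp; ring⟩
  | succ n ih => exact fun hφ a => ih (hφ a)

theorem mono {n n' : ℕ} (h : n ≤ n') {φ : R →ₗ[A] R} (hφ : IsDiffOp A n φ) :
    IsDiffOp A n' φ := by
  induction n', h using Nat.le_induction with
  | base => exact hφ
  | succ n' _ ih => exact ih.succ

theorem derivation_comp (D : Derivation A R R) {n : ℕ} :
    ∀ {φ : R →ₗ[A] R}, IsDiffOp A n φ → IsDiffOp A (n + 1) (D.toLinearMap ∘ₗ φ) := by
  induction n with
  | zero =>
    rintro _ ⟨r, rfl⟩ a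
    refine ⟨r * D a, ?_⟩
    ext
    simp [Derivation.leibniz, smul_eq_mul]
    ring
  | succ n ih =>
    intro φ hφ a
    have hcomm : (D.toLinearMap ∘ₗ φ) ∘ₗ LinearMap.mulLeft A a -
        LinearMap.mulLeft A a ∘ₗ (D.toLinearMap ∘ₗ φ) =
        D.toLinearMap ∘ₗ (φ ∘ₗ LinearMap.mulLeft A a - LinearMap.mulLeft A a ∘ₗ φ) +
        LinearMap.mulLeft A (D a) ∘ₗ φ := by
      ext
      simp [Derivation.leibniz, smul_eq_mul]
      ring
    rw [hcomm]
    exact (ih (hφ a)).add (mulLeft_comp _ hφ)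

end IsDiffOp

theorem isDiffOp_derivation_pow {A R : Type*} [CommRing A] [CommRing R] [Algebra A R]
    (D : Derivation A R R) (e : ℕ) : IsDiffOp A e (D.toLinearMap ^ e) := by
  induction e with
  | zero => exact ⟨1, by ext; simp⟩
  | succ e ih =>
    rw [pow_succ', Module.End.mul_eq_comp]
    exact ih.derivation_comp D

theorem diffPow_max_one {A R : Type*} [CommRing A] [CommRing R] [Algebra A R]
    (n : ℕ) (I : Ideal R) : diffPow A (max n 1) I = diffPow A n I := by
  rcases n with _ | n
  · rfl
  · rw [max_eq_left (by omega)]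

section MvPolynomial

variable {σ k : Type*} [CommRing k]

theorem monomial_mem_span_monomial_image {S : Set (σ →₀ ℕ)} {a : σ →₀ ℕ} (r : k)
    (h : ∃ s ∈ S, s ≤ a) : monomial a r ∈ Ideal.span ((monomial · (1 : k)) '' S) := by
  refine mem_ideal_span_monomial_image.2 fun c hc => ?_
  rwa [Finset.mem_singleton.1 (support_monomial_subset hc)]

theorem X_mul_mem_span_monomial_image {S T : Set (σ →₀ ℕ)} (i : σ)
    (hST : ∀ s ∈ S, s + Finsupp.single i 1 ∈ T) {p : MvPolynomial σ k}
    (hp : p ∈ Ideal.span ((monomial · (1 : k)) '' S)) :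
    X i * p ∈ Ideal.span ((monomial · (1 : k)) '' T) := by
  rw [mem_ideal_span_monomial_image] at hp ⊢
  simp only [support_X_mul, Finset.mem_map, addLeftEmbedding_apply]
  rintro _ ⟨c, hc, rfl⟩
  obtain ⟨s, hs, hsc⟩ := hp c hc
  exact ⟨_, hST s hs, by rw [add_comm]; exact add_le_add_right hsc _⟩

theorem IsDiffOp.apply_monomial_mem_span {n : ℕ} {φ : MvPolynomial σ k →ₗ[k] MvPolynomial σ k}
    (hφ : IsDiffOp k n φ) (a : σ →₀ ℕ) (r : k) :
    φ (monomial a r) ∈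
      Ideal.span ((monomial · (1 : k)) '' {b | b ≤ a ∧ a.degree ≤ b.degree + n}) := by
  induction n generalizing φ a with
  | zero =>
    obtain ⟨r', rfl⟩ := hφ
    exact Ideal.mul_mem_left _ _ (monomial_mem_span_monomial_image r ⟨a, ⟨le_rfl, le_rfl⟩, le_rfl⟩)
  | succ n ihn =>
    induction a using WellFoundedLT.induction with
    | _ a iha =>
      rcases eq_or_ne a 0 with rfl | ha
      · exact mem_ideal_span_monomial_image.2 fun c _ => ⟨0, ⟨le_rfl, by simp⟩, zero_le⟩
      obtain ⟨i, hi⟩ := Finsupp.ne_iff.1 ha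
      set a' := a - Finsupp.single i 1
      have haa : a' + Finsupp.single i 1 = a :=
        tsub_add_cancel_of_le (Finsupp.single_le_iff.2 (Nat.one_le_iff_ne_zero.2 hi))
      have hlt : a' < a := by
        rw [← haa]
        exact lt_add_of_pos_right _ (pos_iff_ne_zero.2 (Finsupp.single_ne_zero.2 one_ne_zero))
      have hdeg : a.degree = a'.degree + 1 := by
        rw [← haa, map_add, Finsupp.degree_single]
      have hsplit : φ (monomial a r) =
          (φ ∘ₗ LinearMap.mulLeft k (X i) - LinearMap.mulLeft k (X i) ∘ₗ φ) (monomial a' r) +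
            X i * φ (monomial a' r) := by
        rw [← haa, add_comm, monomial_single_add, pow_one]
        simp
      rw [hsplit]
      refine Ideal.add_mem _ ?_ ?_
      · refine Ideal.span_mono (Set.image_mono ?_) (ihn (a := a') (hφ (X i)))
        rintro b ⟨hba, hb⟩
        exact ⟨hba.trans hlt.le, by omega⟩
      · refine X_mul_mem_span_monomial_image i ?_ (iha a' hlt)
        rintro b ⟨hba, hb⟩
        refine ⟨haa ▸ add_le_add hba le_rfl, ?_⟩
        rw [map_add, Finsupp.degree_single]
        omega

theorem pderiv_pow_monomial (t : σ) (e : ℕ) (c : σ →₀ ℕ) (r : k) :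
    ((pderiv t).toLinearMap ^ e) (monomial c r) =
      monomial (c - Finsupp.single t e) (r * (c t).descFactorial e) := by
  induction e generalizing c r with
  | zero => simp
  | succ e ih =>
    rw [pow_succ', Module.End.mul_apply, ih, Derivation.coeFn_coe, pderiv_monomial,
      tsub_tsub, ← Finsupp.single_add, Finsupp.tsub_apply, Finsupp.single_eq_same, mul_assoc,
      ← Nat.cast_mul, mul_comm ((c t).descFactorial e), ← Nat.descFactorial_succ]

theorem coeff_sub_single_pderiv_pow (f : MvPolynomial σ k) (t : σ) {e : ℕ} {c : σ →₀ ℕ}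
    (he : e ≤ c t) :
    coeff (c - Finsupp.single t e) (((pderiv t).toLinearMap ^ e) f) =
      f.coeff c * (c t).descFactorial e := by
  classical
  conv_lhs => rw [f.as_sum, map_sum]
  simp only [coeff_sum, pderiv_pow_monomial, coeff_monomial]
  rw [Finset.sum_eq_single c]
  · simp
  · intro c' _ hne
    by_cases hc' : e ≤ c' t
    · rw [if_neg fun h => hne ((tsub_left_inj (Finsupp.single_le_iff.2 hc')
        (Finsupp.single_le_iff.2 he)).1 h)]
    · simp [Nat.descFactorial_eq_zero_iff_lt.2 (not_le.1 hc')]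
  · intro hc
    simp [notMem_support_iff.1 hc]

theorem exists_le_sub_single_of_mem_diffPow [IsDomain k] [CharZero k] {T : Set (σ →₀ ℕ)} {n : ℕ}
    {f : MvPolynomial σ k} (hf : f ∈ diffPow k n (Ideal.span ((monomial · (1 : k)) '' T)))
    {c : σ →₀ ℕ} (hc : c ∈ f.support) (t : σ) {e : ℕ} (hen : e ≤ n - 1) (hec : e ≤ c t) :
    ∃ s ∈ T, s ≤ c - Finsupp.single t e := by
  refine mem_ideal_span_monomial_image.1 (hf _ ((isDiffOp_derivation_pow (pderiv t) e).mono hen))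
    _ (mem_support_iff.2 ?_)
  rw [coeff_sub_single_pderiv_pow f t hec]
  exact mul_ne_zero (mem_support_iff.1 hc) (Nat.cast_ne_zero.2 (Nat.descFactorial_pos.2 hec).ne')

theorem le_apply_of_mem_diffPow [IsDomain k] [CharZero k] {T : Set (σ →₀ ℕ)} {n : ℕ}
    {f : MvPolynomial σ k} (hf : f ∈ diffPow k n (Ideal.span ((monomial · (1 : k)) '' T)))
    {c : σ →₀ ℕ} (hc : c ∈ f.support) {t : σ} {m : ℕ} (hm : 0 < m) (hT : ∀ s ∈ T, m ≤ s t) :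
    n - 1 + m ≤ c t := by
  by_contra! hlt
  obtain ⟨s, hs, hsc⟩ :=
    exists_le_sub_single_of_mem_diffPow hf hc t (e := c t + 1 - m) (by omega) (by omega)
  have hst := hsc t
  rw [Finsupp.tsub_apply, Finsupp.single_eq_same] at hst
  have := hT s hs
  omega

theorem monomial_mem_diffPow {T : Set (σ →₀ ℕ)} {n : ℕ} {a : σ →₀ ℕ}
    (h : ∀ b ≤ a, a.degree ≤ b.degree + (n - 1) → ∃ s ∈ T, s ≤ b) :
    monomial a 1 ∈ diffPow k n (Ideal.span ((monomial · (1 : k)) '' T)) := by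
  intro φ hφ
  refine Ideal.span_le.2 ?_ (hφ.apply_monomial_mem_span a 1)
  rintro _ ⟨b, ⟨hba, hb⟩, rfl⟩
  exact monomial_mem_span_monomial_image 1 (h b hba hb)

theorem prod_X_pow_eq_monomial_equivFunOnFinite [Fintype σ] (s : σ → ℕ) :
    ∏ t, (X t : MvPolynomial σ k) ^ s t = monomial (Finsupp.equivFunOnFinite.symm s) 1 := by
  rw [monomial_eq, C_1, one_mul, Finsupp.prod_fintype _ _ fun _ => pow_zero _]
  rfl

end MvPolynomial

/-- Let `j t` be a generator attaining `βmin t`. If `j t` is not below `b`, it fails at some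
`s ≠ t`, where then `(βmax s - βmin s) + (N - 1 + βmin s - b s) ≥ N`. Two distinct `t` produce
two distinct such `s`, and adding the two inequalities contradicts the pairwise bounds
on `N` together with `hsum`. -/
theorem exists_forall_le_of_sum_le {m : ℕ} (β : Fin (m + 1) → Fin 3 → ℕ) (βmax βmin : Fin 3 → ℕ)
    (hub : ∀ j t, β j t ≤ βmax t) (hach : ∀ t, ∃ j, β j t = βmin t) {N : ℕ}
    (h01 : βmax 0 + βmax 1 - βmin 0 - βmin 1 ≤ N)
    (h12 : βmax 1 + βmax 2 - βmin 1 - βmin 2 ≤ N)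
    (h02 : βmax 0 + βmax 2 - βmin 0 - βmin 2 ≤ N)
    (b : Fin 3 → ℕ) (hb : ∀ t, b t ≤ N - 1 + βmin t)
    (hsum : ∑ t, (N - 1 + βmin t) ≤ ∑ t, b t + (N - 1)) :
    ∃ j, ∀ t, β j t ≤ b t := by
  obtain ⟨j0, hj0⟩ := hach 0
  obtain ⟨j1, hj1⟩ := hach 1
  obtain ⟨j2, hj2⟩ := hach 2
  by_contra! h
  have hfail : ∀ j, b 0 < β j 0 ∨ b 1 < β j 1 ∨ b 2 < β j 2 := fun j => by
    obtain ⟨t, ht⟩ := h j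
    fin_cases t <;> simp_all
  have := hfail j0; have := hfail j1; have := hfail j2
  have := hub j0 1; have := hub j0 2; have := hub j1 0
  have := hub j1 2; have := hub j2 0; have := hub j2 1
  have := hb 0; have := hb 1; have := hb 2
  rw [Fin.sum_univ_three, Fin.sum_univ_three] at hsum
  omega

/-- For a monomial ideal `I ⊆ k[x,y,z]` with `√I = (xyz)`, some differential power
of `I` is principal; explicitly `I^⟨N⟩ = (x^{N−1+β_xmin} y^{N−1+β_ymin} z^{N−1+β_zmin})`
with `N` as in the paper. -/
theorem diffPow_eventually_principal_threeVars {k : Type*} [Field k] [CharZero k]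
    {m : ℕ} (β : Fin (m + 1) → Fin 3 → ℕ) (hpos : ∀ j t, 0 < β j t)
    (I : Ideal (MvPolynomial (Fin 3) k))
    (hI : I = Ideal.span (Set.range fun j : Fin (m + 1) =>
      ∏ t, (MvPolynomial.X t : MvPolynomial (Fin 3) k) ^ β j t))
    (βmax βmin : Fin 3 → ℕ)
    (hmax : ∀ t, βmax t = Finset.univ.sup fun j => β j t)
    (hmin : ∀ t, βmin t = Finset.univ.inf' Finset.univ_nonempty fun j => β j t)
    (N : ℕ)
    (hN : N = max (βmax 0 + βmax 1 - βmin 0 - βmin 1)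
        (max (βmax 1 + βmax 2 - βmin 1 - βmin 2) (βmax 0 + βmax 2 - βmin 0 - βmin 2))) :
    (∃ N' : ℕ, 0 < N' ∧ (diffPow k N' I).IsPrincipal) ∧
      diffPow k N I = Ideal.span
        {∏ t, (MvPolynomial.X t : MvPolynomial (Fin 3) k) ^ (N - 1 + βmin t)} := by
  have hub : ∀ j t, β j t ≤ βmax t := fun j t =>
    hmax t ▸ Finset.le_sup (f := fun j => β j t) (Finset.mem_univ j)
  have hlb : ∀ j t, βmin t ≤ β j t := fun j t => hmin t ▸ Finset.inf'_le _ (Finset.mem_univ j)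
  have hach : ∀ t, ∃ j, β j t = βmin t := fun t => by
    obtain ⟨j, -, hj⟩ := Finset.exists_mem_eq_inf' Finset.univ_nonempty fun j => β j t
    exact ⟨j, (hmin t ▸ hj).symm⟩
  have hI' : I = Ideal.span ((monomial · (1 : k)) ''
      Set.range fun j => Finsupp.equivFunOnFinite.symm (β j)) := by
    simp_rw [hI, prod_X_pow_eq_monomial_equivFunOnFinite, ← Set.range_comp]
    rfl
  have hmain : diffPow k N I = Ideal.span
      {∏ t, (MvPolynomial.X t : MvPolynomial (Fin 3) k) ^ (N - 1 + βmin t)} := by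
    rw [prod_X_pow_eq_monomial_equivFunOnFinite,
      ← Set.image_singleton (f := fun s => monomial s (1 : k)), hI']
    refine le_antisymm (fun f hf => ?_) ?_
    · refine mem_ideal_span_monomial_image.2 fun c hc =>
        ⟨_, Set.mem_singleton _, Finsupp.le_def.2 fun t => ?_⟩
      obtain ⟨j, hj⟩ := hach t
      exact le_apply_of_mem_diffPow hf hc (hj ▸ hpos j t) (by rintro _ ⟨j', rfl⟩; exact hlb j' t)
    · rw [Ideal.span_le, Set.image_singleton, Set.singleton_subset_iff]
      refine monomial_mem_diffPow fun b hba hdeg => ?_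
      obtain ⟨j, hj⟩ := exists_forall_le_of_sum_le β βmax βmin hub hach
        (hN ▸ by omega) (hN ▸ by omega) (hN ▸ by omega) b (fun t => hba t)
        (by simpa only [Finsupp.degree_eq_sum, Finsupp.coe_equivFunOnFinite_symm] using hdeg)
      exact ⟨_, ⟨j, rfl⟩, fun t => hj t⟩
  refine ⟨⟨max N 1, lt_max_of_lt_right one_pos, ?_⟩, hmain⟩
  rw [diffPow_max_one, hmain]
  exact ⟨⟨_, rfl⟩⟩
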